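/- arXiv:1905.11512 — 4 statements merged into one kernel-verified Lean document; each statement's English description precedes it below -/
import Mathlib

section
/- Let G be a finite simple graph on n vertices in which every vertex has degree at least τ, where τ ≥ 1. Then for any two vertices u, v in the same connected component of G, dist_G(u, v) ≤ 4n/τ. -/
/-!
Along a shortest path `u = w₀, w₁, …, w_d = v` the vertices `w₀, w₃, w₆, …` are pairwise at
distance at least `3`, so their closed neighbourhoods are pairwise disjoint. Each of these
`⌊d/3⌋ + 1` neighbourhoods has at least `τ + 1` vertices, hence `(⌊d/3⌋ + 1)(τ + 1) ≤ n`, which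
gives `d τ ≤ 3 n`.
-/

open Finset

namespace SimpleGraph

variable {V : Type*} {G : SimpleGraph V}

lemma Walk.dist_getVert_getVert_of_length_eq_dist {u v : V} (p : G.Walk u v)
    (hp : p.length = G.dist u v) {i j : ℕ} (hij : i ≤ j) (hj : j ≤ p.length) :
    G.dist (p.getVert i) (p.getVert j) = j - i := by
  have hsub : ((p.drop i).take (j - i)).IsSubwalk p :=
    (Walk.isSubwalk_take _ _).trans (Walk.isSubwalk_drop _ _)
  have hend : (p.drop i).getVert (j - i) = p.getVert j := by
    rw [Walk.drop_getVert, Nat.add_sub_cancel' hij]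
  rw [← hend, ← length_eq_dist_of_subwalk hp hsub, Walk.take_length, Walk.drop_length]
  omega

lemma dist_le_two_of_mem_insert_neighborFinset [DecidableEq V] {a b x : V}
    [Fintype (G.neighborSet a)] [Fintype (G.neighborSet b)]
    (ha : x ∈ insert a (G.neighborFinset a)) (hb : x ∈ insert b (G.neighborFinset b)) :
    G.dist a b ≤ 2 := by
  simp only [Finset.mem_insert, mem_neighborFinset] at ha hb
  have hedist : G.edist a b ≤ 2 :=
    calc G.edist a b ≤ G.edist a x + G.edist x b := G.edist_triangle
      _ ≤ 1 + 1 := by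
        gcongr
        · exact edist_le_one_iff_adj_or_eq.mpr (ha.symm.imp id Eq.symm)
        · rw [edist_comm]; exact edist_le_one_iff_adj_or_eq.mpr (hb.symm.imp id Eq.symm)
  exact ENat.toNat_le_toNat hedist (by decide)

variable [Fintype V] [DecidableRel G.Adj]

lemma card_mul_le_card_of_three_le_dist [DecidableEq V] {ι : Type*} {s : Finset ι} {f : ι → V}
    {δ : ℕ} (hdeg : ∀ v, δ ≤ G.degree v)
    (hf : (s : Set ι).Pairwise fun i j ↦ 3 ≤ G.dist (f i) (f j)) :
    #s * (δ + 1) ≤ Fintype.card V := by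
  have hdisj : (s : Set ι).PairwiseDisjoint fun i ↦ insert (f i) (G.neighborFinset (f i)) :=
    fun i hi j hj hij ↦ Finset.disjoint_left.mpr fun x hxi hxj ↦ by
      have := dist_le_two_of_mem_insert_neighborFinset hxi hxj
      have := hf hi hj hij
      omega
  calc #s * (δ + 1) ≤ ∑ i ∈ s, #(insert (f i) (G.neighborFinset (f i))) := by
        rw [← smul_eq_mul, ← Finset.sum_const]
        refine Finset.sum_le_sum fun i _ ↦ ?_
        rw [Finset.card_insert_of_notMem (by simp), card_neighborFinset_eq_degree]
        exact Nat.succ_le_succ (hdeg _)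
    _ = #(s.biUnion fun i ↦ insert (f i) (G.neighborFinset (f i))) :=
        (Finset.card_biUnion hdisj).symm
    _ ≤ Fintype.card V := Finset.card_le_univ _

lemma Reachable.dist_mul_le_three_mul_card {u v : V} (h : G.Reachable u v) {δ : ℕ}
    (hdeg : ∀ v, δ ≤ G.degree v) : G.dist u v * δ ≤ 3 * Fintype.card V := by
  classical
  obtain ⟨p, hp⟩ := h.exists_walk_length_eq_dist
  have hspread : (↑(Finset.range (G.dist u v / 3 + 1)) : Set ℕ).Pairwise
      fun i j ↦ 3 ≤ G.dist (p.getVert (3 * i)) (p.getVert (3 * j)) := by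
    intro i hi j hj hij
    simp only [Finset.coe_range, Set.mem_Iio] at hi hj
    rcases hij.lt_or_gt with hlt | hlt
    · rw [p.dist_getVert_getVert_of_length_eq_dist hp (by omega) (by omega)]; omega
    · rw [dist_comm, p.dist_getVert_getVert_of_length_eq_dist hp (by omega) (by omega)]; omega
  have hcount := card_mul_le_card_of_three_le_dist hdeg hspread
  rw [Finset.card_range] at hcount
  calc G.dist u v * δ ≤ 3 * (G.dist u v / 3 + 1) * (δ + 1) := by gcongr <;> omega
    _ ≤ 3 * Fintype.card V := by rw [mul_assoc]; exact Nat.mul_le_mul_left 3 hcount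

end SimpleGraph

/-- if all degrees are at least τ, then vertices in the same
connected component are at distance at most 4n/τ. -/
theorem stmt2 {V : Type*} [Fintype V] (G : SimpleGraph V) [DecidableRel G.Adj]
    (τ : ℕ) (hτ : 1 ≤ τ) (hdeg : ∀ v : V, τ ≤ G.degree v)
    (u v : V) (h : G.Reachable u v) :
    (G.dist u v : ℝ) ≤ 4 * (Fintype.card V : ℝ) / (τ : ℝ) := by
  have hτ_pos : (0 : ℝ) < τ := by exact_mod_cast hτ
  have hbound : (G.dist u v * τ : ℝ) ≤ 3 * Fintype.card V := by
    exact_mod_cast h.dist_mul_le_three_mul_card hdeg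
  rw [le_div_iff₀ hτ_pos]
  linarith [(Fintype.card V).cast_nonneg (α := ℝ)]
end

section
/- Let W be an α-expander on vertex set V with maximum degree at most d (α > 0, d ≥ 1), and let F ⊆ E(W) be a set of edges with |F| ≤ α|S|/2, where S ⊆ V is a nonempty set with |S| ≤ |V|/2. Then in the graph W' = W \ F (delete the edges of F), the set S together with its W'-neighbors has size at least |S| · (1 + α/(2d)). -/
/-- Edges of a multigraph (given by its endpoint function) crossing between `A` and `B`. -/
def crossSet {V E : Type*} (ends : E → V × V) (A B : Set V) : Set E :=
  {e | ((ends e).1 ∈ A ∧ (ends e).2 ∈ B) ∨ ((ends e).1 ∈ B ∧ (ends e).2 ∈ A)}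

/-- The neighborhood of a set `S` using only edges outside `F`. -/
def nbhdWithout {V E : Type*} (ends : E → V × V) (F : Set E) (S : Set V) : Set V :=
  {w | ∃ e : E, e ∉ F ∧
    (((ends e).1 ∈ S ∧ (ends e).2 = w) ∨ ((ends e).2 ∈ S ∧ (ends e).1 = w))}

/-! Since `|S| ≤ |V|/2`, expansion puts at least `α|S|` edges between `S` and its complement,
and at least half of them survive the deletion of `F`. Each surviving one has its outer endpoint
in `N_{W'}(S) \ S`, and a vertex there carries at most `d` of them, so
`|N_{W'}(S) \ S| ≥ α|S| / (2d)`. -/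

theorem Finset.set_ncard_biUnion_le_card_mul {ι α : Type*} (t : Finset ι) (s : ι → Set α)
    (n : ℕ) (h : ∀ i ∈ t, (s i).ncard ≤ n) : (⋃ i ∈ t, s i).ncard ≤ t.card * n :=
  (t.set_ncard_biUnion_le s).trans (by simpa using Finset.sum_le_card_nsmul t _ n h)

section Expansion

variable {V E : Type*} (ends : E → V × V)

def incidentEdges (v : V) : Set E := {e | (ends e).1 = v ∨ (ends e).2 = v}

def IsEdgeExpander (α : ℝ) : Prop :=
  ∀ A B : Set V, A.Nonempty → B.Nonempty → Disjoint A B → A ∪ B = Set.univ →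
    α * min (A.ncard : ℝ) (B.ncard : ℝ) ≤ ((crossSet ends A B).ncard : ℝ)

theorem IsEdgeExpander.mul_ncard_le_ncard_crossSet_compl [Fintype V] {α : ℝ}
    (hexp : IsEdgeExpander ends α) {S : Set V} (hhalf : 2 * S.ncard ≤ Fintype.card V) :
    α * S.ncard ≤ (crossSet ends S Sᶜ).ncard := by
  rcases S.eq_empty_or_nonempty with rfl | hS
  · simp
  have hcompl : S.ncard + Sᶜ.ncard = Fintype.card V := by
    rw [← Nat.card_eq_fintype_card]
    exact Set.ncard_add_ncard_compl S
  have hScne : Sᶜ.Nonempty := by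
    rw [← Set.ncard_pos]
    have := (Set.ncard_pos S.toFinite).mpr hS
    omega
  have hle : (S.ncard : ℝ) ≤ Sᶜ.ncard := by exact_mod_cast (by omega : S.ncard ≤ Sᶜ.ncard)
  simpa [min_eq_left hle] using hexp S Sᶜ hS hScne disjoint_compl_right S.union_compl_self

theorem crossSet_compl_diff_subset_biUnion_incidentEdges (F : Set E) (S : Set V) :
    crossSet ends S Sᶜ \ F ⊆ ⋃ v ∈ nbhdWithout ends F S \ S, incidentEdges ends v := by
  rintro e ⟨(⟨h1, h2⟩ | ⟨h1, h2⟩), hF⟩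
  · exact Set.mem_biUnion ⟨⟨e, hF, .inl ⟨h1, rfl⟩⟩, h2⟩ (.inr rfl)
  · exact Set.mem_biUnion ⟨⟨e, hF, .inr ⟨h2, rfl⟩⟩, h1⟩ (.inl rfl)

theorem ncard_crossSet_compl_diff_le [Fintype V] [Finite E] {d : ℕ}
    (hdeg : ∀ v : V, (incidentEdges ends v).ncard ≤ d) (F : Set E) (S : Set V) :
    (crossSet ends S Sᶜ \ F).ncard ≤ d * (nbhdWithout ends F S \ S).ncard := by
  classical
  calc (crossSet ends S Sᶜ \ F).ncard
      ≤ (⋃ v ∈ (nbhdWithout ends F S \ S).toFinset, incidentEdges ends v).ncard := by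
        refine Set.ncard_le_ncard ?_
        simpa using crossSet_compl_diff_subset_biUnion_incidentEdges ends F S
    _ ≤ (nbhdWithout ends F S \ S).toFinset.card * d :=
        Finset.set_ncard_biUnion_le_card_mul _ _ d fun v _ ↦ hdeg v
    _ = d * (nbhdWithout ends F S \ S).ncard := by rw [Set.ncard_eq_toFinset_card', mul_comm]

end Expansion

theorem stmt4_general {V E : Type*} [Fintype V] [Fintype E] (ends : E → V × V)
    (α : ℝ) (d : ℕ)
    (hexp : ∀ A B : Set V, A.Nonempty → B.Nonempty → Disjoint A B → A ∪ B = Set.univ →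
      α * min (A.ncard : ℝ) (B.ncard : ℝ) ≤ ((crossSet ends A B).ncard : ℝ))
    (hdeg : ∀ v : V, ({e : E | (ends e).1 = v ∨ (ends e).2 = v}.ncard) ≤ d)
    (S : Set V) (hhalf : 2 * S.ncard ≤ Fintype.card V)
    (F : Set E) (hF : (F.ncard : ℝ) ≤ α * (S.ncard : ℝ) / 2) :
    (S.ncard : ℝ) * (1 + α / (2 * (d : ℝ))) ≤
      (((S ∪ nbhdWithout ends F S)).ncard : ℝ) := by
  set N := nbhdWithout ends F S \ S
  have hcross := IsEdgeExpander.mul_ncard_le_ncard_crossSet_compl ends hexp hhalf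
  have hsplit : ((crossSet ends S Sᶜ).ncard : ℝ) ≤ (crossSet ends S Sᶜ \ F).ncard + F.ncard := by
    exact_mod_cast Set.ncard_le_ncard_sdiff_add_ncard _ F
  have hcount : ((crossSet ends S Sᶜ \ F).ncard : ℝ) ≤ d * N.ncard := by
    exact_mod_cast ncard_crossSet_compl_diff_le ends hdeg F S
  have hN : S.ncard * α / (2 * d) ≤ N.ncard :=
    div_le_of_le_mul₀ (by positivity) (by positivity) (by linarith)
  have hunion : (S ∪ nbhdWithout ends F S).ncard = S.ncard + N.ncard := by
    rw [← Set.union_sdiff_self, Set.ncard_union_eq Set.disjoint_sdiff_right]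
  calc (S.ncard : ℝ) * (1 + α / (2 * d))
      = S.ncard + S.ncard * α / (2 * d) := by ring
    _ ≤ S.ncard + N.ncard := by gcongr
    _ = (S ∪ nbhdWithout ends F S).ncard := by rw [hunion, Nat.cast_add]

/-- deleting at most α|S|/2 edges from an α-expander of maximum
degree at most d, the set S still expands by a factor (1 + α/(2d)). -/
theorem stmt4 {V E : Type*} [Fintype V] [Fintype E] (ends : E → V × V)
    (α : ℝ) (d : ℕ) (hα : 0 < α) (hd : 1 ≤ d)
    (hexp : ∀ A B : Set V, A.Nonempty → B.Nonempty → Disjoint A B → A ∪ B = Set.univ →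
      α * min (A.ncard : ℝ) (B.ncard : ℝ) ≤ ((crossSet ends A B).ncard : ℝ))
    (hdeg : ∀ v : V, ({e : E | (ends e).1 = v ∨ (ends e).2 = v}.ncard) ≤ d)
    (S : Set V) (hS : S.Nonempty) (hhalf : 2 * S.ncard ≤ Fintype.card V)
    (F : Set E) (hF : (F.ncard : ℝ) ≤ α * (S.ncard : ℝ) / 2) :
    (S.ncard : ℝ) * (1 + α / (2 * (d : ℝ))) ≤
      (((S ∪ nbhdWithout ends F S)).ncard : ℝ) :=
  stmt4_general ends α d hexp hdeg S hhalf F hF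
end

section
/- Let G and W be graphs with V(W) = V(G) = V. Suppose W is a (1/2)-expander with maximum degree at most d, and for every edge e = (u,v) of W there is a path P(e) in G from u to v, such that every vertex of G lies on at most η of the paths {P(e) : e ∈ E(W)}. Then for every vertex cut (Y, X, Z) of G with Y and Z nonempty (no edge of G joins Y to Z), we have |X| · (d + η) ≥ min(|Y|, |Z|) / 2. -/
/-!
Take `A = Y` and `B = X ∪ Z` in the expansion of `W`, so that at least `min(|Y|, |Z|)/2` edges of
`W` leave `Y`. Those ending in `X` are at most `d|X|` by the degree bound. Those ending in `Z` have
an embedding path from `Y` to `Z`, which must step out of `Y` into a neighbour of `Y`, i.e. into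
`X`; by congestion there are at most `η|X|` of them.
-/

lemma Set.ncard_le_ncard_mul_of_subset_biUnion {ι α : Type*} [Finite α] {T : Set α}
    {X : Set ι} (hX : X.Finite) {S : ι → Set α} {c : ℕ}
    (hT : T ⊆ ⋃ x ∈ X, S x) (hS : ∀ x ∈ X, (S x).ncard ≤ c) :
    T.ncard ≤ X.ncard * c :=
  calc T.ncard ≤ (⋃ x ∈ hX.toFinset, S x).ncard :=
        Set.ncard_le_ncard (by simpa using hT)
    _ ≤ ∑ x ∈ hX.toFinset, (S x).ncard := hX.toFinset.set_ncard_biUnion_le S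
    _ ≤ hX.toFinset.card • c := Finset.sum_le_card_nsmul _ _ _ (by simpa using hS)
    _ = X.ncard * c := by rw [Set.ncard_eq_toFinset_card X hX, smul_eq_mul]

lemma SimpleGraph.Walk.exists_mem_support_adj_of_mem_of_notMem {V : Type*} {G : SimpleGraph V}
    {S : Set V} {u v : V} (w : G.Walk u v) (hu : u ∈ S) (hv : v ∉ S) :
    ∃ x ∈ w.support, x ∉ S ∧ ∃ y ∈ S, G.Adj y x := by
  obtain ⟨d, hd, hfst, hsnd⟩ := w.exists_boundary_dart S hu hv
  exact ⟨d.snd, w.dart_snd_mem_support_of_mem_darts hd, hsnd, d.fst, hfst, d.adj⟩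

section crossSet

variable {V E : Type*} (ends : E → V × V)

lemma crossSet_union_right (A B C : Set V) :
    crossSet ends A (B ∪ C) = crossSet ends A B ∪ crossSet ends A C := by
  ext e
  simp only [crossSet, Set.mem_union, Set.mem_ofPred_eq]
  tauto

lemma ncard_crossSet_le_mul_of_degree_le [Finite E] (A B : Set V) [Finite B] {d : ℕ}
    (hdeg : ∀ v ∈ B, {e : E | (ends e).1 = v ∨ (ends e).2 = v}.ncard ≤ d) :
    (crossSet ends A B).ncard ≤ B.ncard * d := by
  refine Set.ncard_le_ncard_mul_of_subset_biUnion (Set.toFinite B) ?_ hdeg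
  rintro e (⟨-, h⟩ | ⟨h, -⟩)
  · exact Set.mem_biUnion h (Or.inr rfl)
  · exact Set.mem_biUnion h (Or.inl rfl)

lemma ncard_crossSet_le_mul_of_congestion_le [Finite E] {G : SimpleGraph V}
    (P : ∀ e : E, G.Walk (ends e).1 (ends e).2) {η : ℕ}
    (hcong : ∀ x : V, {e : E | x ∈ (P e).support}.ncard ≤ η)
    {Y X Z : Set V} [Finite X] (hdYZ : Disjoint Y Z) (hcover : Y ∪ X ∪ Z = Set.univ)
    (hcut : ∀ y ∈ Y, ∀ z ∈ Z, ¬ G.Adj y z) :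
    (crossSet ends Y Z).ncard ≤ X.ncard * η := by
  have hsep : ∀ {u v : V} (w : G.Walk u v), u ∈ Y → v ∈ Z → ∃ x ∈ X, x ∈ w.support := by
    intro u v w hu hv
    obtain ⟨x, hxw, hxY, y, hy, hyx⟩ :=
      w.exists_mem_support_adj_of_mem_of_notMem hu (hdYZ.notMem_of_mem_right hv)
    have hx : x ∈ Y ∪ X ∪ Z := hcover ▸ Set.mem_univ x
    refine ⟨x, ?_, hxw⟩
    rcases hx with (hxY' | hxX) | hxZ
    · exact absurd hxY' hxY
    · exact hxX
    · exact absurd hyx (hcut y hy x hxZ)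
  refine Set.ncard_le_ncard_mul_of_subset_biUnion (Set.toFinite X) ?_ (fun x _ => hcong x)
  rintro e (⟨h1, h2⟩ | ⟨h1, h2⟩)
  · obtain ⟨x, hx, hxP⟩ := hsep (P e) h1 h2
    exact Set.mem_biUnion hx hxP
  · obtain ⟨x, hx, hxP⟩ := hsep (P e).reverse h2 h1
    rw [SimpleGraph.Walk.support_reverse, List.mem_reverse] at hxP
    exact Set.mem_biUnion hx hxP

end crossSet

theorem stmt8_general {V EW : Type*} [Fintype V] [Fintype EW]
    (G : SimpleGraph V) (ends : EW → V × V) (d η : ℕ)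
    (hexpW : ∀ A B : Set V, A.Nonempty → B.Nonempty → Disjoint A B → A ∪ B = Set.univ →
      (1 / 2 : ℝ) * min (A.ncard : ℝ) (B.ncard : ℝ) ≤ ((crossSet ends A B).ncard : ℝ))
    (hdeg : ∀ v : V, ({e : EW | (ends e).1 = v ∨ (ends e).2 = v}.ncard) ≤ d)
    (P : ∀ e : EW, G.Walk (ends e).1 (ends e).2)
    (hcong : ∀ x : V, ({e : EW | x ∈ (P e).support}.ncard) ≤ η)
    (Y X Z : Set V) (hY : Y.Nonempty) (hZ : Z.Nonempty)
    (hdYX : Disjoint Y X) (hdYZ : Disjoint Y Z)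
    (hcover : Y ∪ X ∪ Z = Set.univ)
    (hcut : ∀ y ∈ Y, ∀ z ∈ Z, ¬ G.Adj y z) :
    min (Y.ncard : ℝ) (Z.ncard : ℝ) / 2 ≤ (X.ncard : ℝ) * ((d : ℝ) + (η : ℝ)) := by
  have hexp := hexpW Y (X ∪ Z) hY (hZ.mono Set.subset_union_right)
    (Set.disjoint_union_right.mpr ⟨hdYX, hdYZ⟩) (by rwa [← Set.union_assoc])
  have hZXZ : (Z.ncard : ℝ) ≤ ((X ∪ Z).ncard : ℝ) := by
    exact_mod_cast Set.ncard_le_ncard Set.subset_union_right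
  have hsplit : (crossSet ends Y (X ∪ Z)).ncard ≤
      (crossSet ends Y X).ncard + (crossSet ends Y Z).ncard :=
    crossSet_union_right ends Y X Z ▸ Set.ncard_union_le _ _
  have hcrossX : (crossSet ends Y X).ncard ≤ X.ncard * d :=
    ncard_crossSet_le_mul_of_degree_le ends Y X fun v _ => hdeg v
  have hcrossZ : (crossSet ends Y Z).ncard ≤ X.ncard * η :=
    ncard_crossSet_le_mul_of_congestion_le ends P hcong hdYZ hcover hcut
  have hcross : ((crossSet ends Y (X ∪ Z)).ncard : ℝ) ≤ X.ncard * d + X.ncard * η := by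
    exact_mod_cast hsplit.trans (add_le_add hcrossX hcrossZ)
  have hmin := min_le_min_left (Y.ncard : ℝ) hZXZ
  linarith

/-- witness-expander bound for vertex cuts: if a (1/2)-expander W of
maximum degree d embeds into G via paths with vertex-congestion η, then every
vertex cut (Y,X,Z) of G with Y,Z nonempty satisfies |X|(d+η) ≥ min(|Y|,|Z|)/2. -/
theorem stmt8 {V EW : Type*} [Fintype V] [Fintype EW]
    (G : SimpleGraph V) (ends : EW → V × V) (d η : ℕ)
    (hexpW : ∀ A B : Set V, A.Nonempty → B.Nonempty → Disjoint A B → A ∪ B = Set.univ →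
      (1 / 2 : ℝ) * min (A.ncard : ℝ) (B.ncard : ℝ) ≤ ((crossSet ends A B).ncard : ℝ))
    (hdeg : ∀ v : V, ({e : EW | (ends e).1 = v ∨ (ends e).2 = v}.ncard) ≤ d)
    (P : ∀ e : EW, G.Walk (ends e).1 (ends e).2)
    (hpath : ∀ e : EW, (P e).IsPath)
    (hcong : ∀ x : V, ({e : EW | x ∈ (P e).support}.ncard) ≤ η)
    (Y X Z : Set V) (hY : Y.Nonempty) (hZ : Z.Nonempty)
    (hdYX : Disjoint Y X) (hdYZ : Disjoint Y Z) (hdXZ : Disjoint X Z)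
    (hcover : Y ∪ X ∪ Z = Set.univ)
    (hcut : ∀ y ∈ Y, ∀ z ∈ Z, ¬ G.Adj y z) :
    min (Y.ncard : ℝ) (Z.ncard : ℝ) / 2 ≤ (X.ncard : ℝ) * ((d : ℝ) + (η : ℝ)) :=
  stmt8_general G ends d η hexpW hdeg P hcong Y X Z hY hZ hdYX hdYZ hcover hcut
end

section
/- Let 0 < α ≤ 1/2. Let H be a 4α-expander on vertex set S, let T be a finite set disjoint from S, and let M be a matching consisting of |T| edges, matching each vertex of T to a distinct vertex of S. Then the graph W on vertex set S ∪ T with edge set E(H) ∪ M is an α-expander. -/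
/-!
Let `(A, Aᶜ)` be a cut of `S ∪ T` and let `D` be the pendant vertices `t ∈ T` whose
matching edge `t — f t` crosses it. Every `t ∈ A ∩ T` outside `D` is matched into `A ∩ S`,
so `|A| ≤ 2 |A ∩ S| + |D|`, and likewise for `Aᶜ`. The cut contains the `H`-edges between
`A ∩ S` and `Aᶜ ∩ S`, at least `4α · min(|A ∩ S|, |Aᶜ ∩ S|)` of them, together with the
`|D|` matching edges, which are new since they leave `S`. Hence
`α · min(|A|, |Aᶜ|) ≤ 2α · min(|A ∩ S|, |Aᶜ ∩ S|) + α |D|` is at most the size of the cut.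
-/

/-- Edges of a simple graph `G` crossing between `A` and `B`. -/
def crossSetG {V : Type*} (G : SimpleGraph V) (A B : Set V) : Set (Sym2 V) :=
  {f | f ∈ G.edgeSet ∧ ∃ a ∈ A, ∃ b ∈ B, f = s(a, b)}

open Set

section

variable {V : Type*}

theorem crossSetG_mono {G G' : SimpleGraph V} {A A' B B' : Set V} (hG : G ≤ G') (hA : A ⊆ A')
    (hB : B ⊆ B') : crossSetG G A B ⊆ crossSetG G' A' B' := by
  rintro e ⟨he, a, ha, b, hb, rfl⟩
  exact ⟨SimpleGraph.edgeSet_mono hG he, a, hA ha, b, hB hb, rfl⟩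

def crossingPendants (T : Set V) (f : V → V) (A : Set V) : Set V :=
  {t | t ∈ T ∧ ¬(t ∈ A ↔ f t ∈ A)}

theorem crossingPendants_compl (T : Set V) (f : V → V) (A : Set V) :
    crossingPendants T f Aᶜ = crossingPendants T f A := by
  ext t
  simp only [crossingPendants, mem_compl_iff, not_iff_not]

theorem le_ncard_crossSetG_inter_compl {H : SimpleGraph V} {S : Set V} {β : ℝ}
    (hexp : ∀ A B : Set V, A.Nonempty → B.Nonempty → Disjoint A B → A ∪ B = S →
      β * min (A.ncard : ℝ) (B.ncard : ℝ) ≤ ((crossSetG H A B).ncard : ℝ))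
    (A : Set V) :
    β * min ((A ∩ S).ncard : ℝ) ((Aᶜ ∩ S).ncard : ℝ) ≤
      ((crossSetG H (A ∩ S) (Aᶜ ∩ S)).ncard : ℝ) := by
  rcases (A ∩ S).eq_empty_or_nonempty with hA | hA
  · simp [hA]
  rcases (Aᶜ ∩ S).eq_empty_or_nonempty with hB | hB
  · simp [hB]
  refine hexp _ _ hA hB (disjoint_compl_right.mono inter_subset_left inter_subset_left) ?_
  rw [← union_inter_distrib_right, union_compl_self, univ_inter]

section Pendants

variable {S T : Set V} {f : V → V}

theorem ncard_le_two_mul_ncard_inter_add_ncard_crossingPendants [Finite V]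
    (hcover : S ∪ T = univ) (hfS : MapsTo f T S) (hfinj : InjOn f T) (P : Set V) :
    P.ncard ≤ 2 * (P ∩ S).ncard + (crossingPendants T f P).ncard := by
  set stay := {t | t ∈ T ∧ t ∈ P ∧ f t ∈ P}
  have hstay : stay.ncard ≤ (P ∩ S).ncard :=
    ncard_le_ncard_of_injOn f (fun t ht => ⟨ht.2.2, hfS ht.1⟩) (hfinj.mono fun t ht => ht.1)
  have hsplit : P ⊆ (P ∩ S) ∪ (crossingPendants T f P ∪ stay) := by
    intro t htP
    have ht : t ∈ S ∪ T := hcover ▸ mem_univ t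
    rcases ht with htS | htT
    · exact Or.inl ⟨htP, htS⟩
    · by_cases hft : f t ∈ P
      · exact Or.inr (Or.inr ⟨htT, htP, hft⟩)
      · exact Or.inr (Or.inl ⟨htT, fun h => hft (h.1 htP)⟩)
  calc P.ncard ≤ ((P ∩ S) ∪ (crossingPendants T f P ∪ stay)).ncard := ncard_le_ncard hsplit
    _ ≤ (P ∩ S).ncard + ((crossingPendants T f P).ncard + stay.ncard) :=
      (ncard_union_le _ _).trans (Nat.add_le_add_left (ncard_union_le _ _) _)
    _ ≤ 2 * (P ∩ S).ncard + (crossingPendants T f P).ncard := by omega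

theorem min_ncard_compl_le [Finite V] (hcover : S ∪ T = univ) (hfS : MapsTo f T S)
    (hfinj : InjOn f T) (A : Set V) :
    min A.ncard Aᶜ.ncard ≤
      2 * min (A ∩ S).ncard (Aᶜ ∩ S).ncard + (crossingPendants T f A).ncard := by
  have hA := ncard_le_two_mul_ncard_inter_add_ncard_crossingPendants hcover hfS hfinj A
  have hAc := ncard_le_two_mul_ncard_inter_add_ncard_crossingPendants hcover hfS hfinj Aᶜ
  rw [crossingPendants_compl] at hAc
  omega

theorem injOn_mk_apply (hST : Disjoint S T) (hfS : MapsTo f T S) :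
    InjOn (fun t => s(t, f t)) T := by
  intro x hx y hy hxy
  rcases Sym2.eq_iff.mp hxy with ⟨h, -⟩ | ⟨h, -⟩
  · exact h
  · exact absurd hx (hST.notMem_of_mem_left (h ▸ hfS hy))

theorem mk_apply_mem_crossSetG_fromRel (hST : Disjoint S T) (hfS : MapsTo f T S) {A : Set V}
    {t : V} (ht : t ∈ crossingPendants T f A) :
    s(t, f t) ∈ crossSetG (SimpleGraph.fromRel fun a b => a ∈ T ∧ b = f a) A Aᶜ := by
  obtain ⟨htT, hcross⟩ := ht
  have hne : t ≠ f t := fun h => hST.notMem_of_mem_left (h ▸ hfS htT) htT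
  have hedge : s(t, f t) ∈ (SimpleGraph.fromRel fun a b => a ∈ T ∧ b = f a).edgeSet :=
    ⟨hne, Or.inl ⟨htT, rfl⟩⟩
  by_cases htA : t ∈ A
  · exact ⟨hedge, t, htA, f t, fun h => hcross (iff_of_true htA h), rfl⟩
  · exact ⟨hedge, f t, not_not.mp fun h => hcross (iff_of_false htA h), t, htA, Sym2.eq_swap⟩

theorem ncard_crossSetG_inter_add_ncard_crossingPendants_le [Finite V] (H : SimpleGraph V)
    (hST : Disjoint S T) (hfS : MapsTo f T S) (A : Set V) :
    (crossSetG H (A ∩ S) (Aᶜ ∩ S)).ncard + (crossingPendants T f A).ncard ≤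
      (crossSetG (H ⊔ SimpleGraph.fromRel fun a b => a ∈ T ∧ b = f a) A Aᶜ).ncard := by
  set g : V → Sym2 V := fun t => s(t, f t)
  have hinj : InjOn g (crossingPendants T f A) :=
    (injOn_mk_apply hST hfS).mono fun t ht => ht.1
  have hdisj : Disjoint (crossSetG H (A ∩ S) (Aᶜ ∩ S)) (g '' crossingPendants T f A) := by
    rw [disjoint_left]
    rintro _ ⟨-, a, ha, b, hb, rfl⟩ ⟨t, ht, hgt⟩
    have htS : t ∈ S := by
      have htab : t ∈ s(a, b) := hgt ▸ Sym2.mem_mk_left t (f t)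
      rcases Sym2.mem_iff.mp htab with rfl | rfl
      exacts [ha.2, hb.2]
    exact hST.notMem_of_mem_left htS ht.1
  have hsub : crossSetG H (A ∩ S) (Aᶜ ∩ S) ∪ g '' crossingPendants T f A ⊆
      crossSetG (H ⊔ SimpleGraph.fromRel fun a b => a ∈ T ∧ b = f a) A Aᶜ :=
    union_subset (crossSetG_mono le_sup_left inter_subset_left inter_subset_left)
      (image_subset_iff.mpr fun _ ht => crossSetG_mono le_sup_right subset_rfl subset_rfl
        (mk_apply_mem_crossSetG_fromRel hST hfS ht))
  calc _ = (crossSetG H (A ∩ S) (Aᶜ ∩ S) ∪ g '' crossingPendants T f A).ncard := by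
        rw [ncard_union_eq hdisj, hinj.ncard_image]
    _ ≤ _ := ncard_le_ncard hsub

end Pendants

end

theorem stmt12_general {V : Type*} [Fintype V] (α : ℝ) (hα1 : 0 < α) (hα2 : α ≤ 1 / 2)
    (S T : Set V) (hST : Disjoint S T) (hcover : S ∪ T = Set.univ)
    (H : SimpleGraph V)
    (hexpH : ∀ A B : Set V, A.Nonempty → B.Nonempty → Disjoint A B → A ∪ B = S →
      4 * α * min (A.ncard : ℝ) (B.ncard : ℝ) ≤ ((crossSetG H A B).ncard : ℝ))
    (f : V → V) (hfS : ∀ t ∈ T, f t ∈ S) (hfinj : Set.InjOn f T) :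
    ∀ A B : Set V, A.Nonempty → B.Nonempty → Disjoint A B → A ∪ B = Set.univ →
      α * min (A.ncard : ℝ) (B.ncard : ℝ) ≤
        ((crossSetG (H ⊔ SimpleGraph.fromRel (fun a b => a ∈ T ∧ b = f a)) A B).ncard : ℝ) := by
  intro A B _ _ hAB hABu
  obtain rfl : Aᶜ = B := IsCompl.compl_eq ⟨hAB, codisjoint_iff.mpr hABu⟩
  have hsize : (min A.ncard Aᶜ.ncard : ℝ) ≤
      2 * min ((A ∩ S).ncard : ℝ) (Aᶜ ∩ S).ncard + (crossingPendants T f A).ncard := by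
    exact_mod_cast min_ncard_compl_le hcover hfS hfinj A
  have hexp := le_ncard_crossSetG_inter_compl hexpH A
  have hcut :
      ((crossSetG H (A ∩ S) (Aᶜ ∩ S)).ncard : ℝ) + (crossingPendants T f A).ncard ≤
      (crossSetG (H ⊔ SimpleGraph.fromRel fun a b => a ∈ T ∧ b = f a) A Aᶜ).ncard := by
    exact_mod_cast ncard_crossSetG_inter_add_ncard_crossingPendants_le H hST hfS A
  have hmin_nonneg : (0 : ℝ) ≤ min ((A ∩ S).ncard : ℝ) (Aᶜ ∩ S).ncard := by positivity
  have hD_nonneg : (0 : ℝ) ≤ (crossingPendants T f A).ncard := by positivity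
  calc α * min (A.ncard : ℝ) Aᶜ.ncard
      ≤ α * (2 * min ((A ∩ S).ncard : ℝ) (Aᶜ ∩ S).ncard + (crossingPendants T f A).ncard) := by
        gcongr
    _ ≤ 4 * α * min ((A ∩ S).ncard : ℝ) (Aᶜ ∩ S).ncard + (crossingPendants T f A).ncard := by
        nlinarith [mul_nonneg hα1.le hmin_nonneg,
          mul_nonneg (by linarith : (0 : ℝ) ≤ 1 - α) hD_nonneg]
    _ ≤ _ := by linarith

/-- adding a pendant matching from T to a 4α-expander on S yields an
α-expander on S ∪ T (for 0 < α ≤ 1/2). -/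
theorem stmt12 {V : Type*} [Fintype V] (α : ℝ) (hα1 : 0 < α) (hα2 : α ≤ 1 / 2)
    (S T : Set V) (hST : Disjoint S T) (hcover : S ∪ T = Set.univ)
    (H : SimpleGraph V) (hHS : ∀ a b : V, H.Adj a b → a ∈ S ∧ b ∈ S)
    (hexpH : ∀ A B : Set V, A.Nonempty → B.Nonempty → Disjoint A B → A ∪ B = S →
      4 * α * min (A.ncard : ℝ) (B.ncard : ℝ) ≤ ((crossSetG H A B).ncard : ℝ))
    (f : V → V) (hfS : ∀ t ∈ T, f t ∈ S) (hfinj : Set.InjOn f T) :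
    ∀ A B : Set V, A.Nonempty → B.Nonempty → Disjoint A B → A ∪ B = Set.univ →
      α * min (A.ncard : ℝ) (B.ncard : ℝ) ≤
        ((crossSetG (H ⊔ SimpleGraph.fromRel (fun a b => a ∈ T ∧ b = f a)) A B).ncard : ℝ) :=
  stmt12_general α hα1 hα2 S T hST hcover H hexpH f hfS hfinj
end
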